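/- Let p, c, α^r, α^c be real numbers with p < 1/2. Then the limit as n → ∞ of (1/n) · ∑_{j=1}^{n} (n/(j+1))^{p} · ( α^r·cos(c·log(n/(j+1))) + α^c·sin(c·log(n/(j+1))) ) exists and equals ( (1−p)·α^r + c·α^c ) / ( (1−p)² + c² ). -/

import Mathlib

/-!
With `s = p + c i`, the summand is `αʳ Re z + αᶜ Im z` for `z = ((j + 1) / n) ^ (-s)`, so the
averages are real-linear images of the Riemann sums `(1/n) ∑ ((j + 1)/n) ^ (-s)` of the improper
integral `∫₀¹ x ^ (-s) dx = 1 / (1 - s)`, which converges since `Re s < 1`. The Riemann sums are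
integrals over `(0, 1]` of `t(x) ^ (-s)` for a step function `t` with `x < t(x) ≤ 3`, so dominated
convergence with the integrable majorant `x ^ (-Re s) + 3 ^ (-Re s)` gives their limit.
-/

open Real Filter MeasureTheory Set Interval

lemma rpow_le_rpow_add_rpow {x t b : ℝ} (hx : 0 < x) (hxt : x ≤ t) (htb : t ≤ b) (q : ℝ) :
    t ^ q ≤ x ^ q + b ^ q := by
  rcases le_total q 0 with hq | hq
  · linarith [rpow_le_rpow_of_nonpos hx hxt hq, rpow_nonneg (hx.le.trans (hxt.trans htb)) q]
  · linarith [rpow_le_rpow (hx.le.trans hxt) htb hq, rpow_nonneg hx.le q]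

namespace Complex

lemma re_ofReal_cpow {u : ℝ} (hu : 0 < u) (s : ℂ) :
    ((u : ℂ) ^ s).re = u ^ s.re * Real.cos (s.im * Real.log u) := by
  rw [cpow_def_of_ne_zero (ofReal_ne_zero.2 hu.ne'), ← ofReal_log hu.le, exp_re,
    rpow_def_of_pos hu]
  simp [mul_comm]

lemma im_ofReal_cpow {u : ℝ} (hu : 0 < u) (s : ℂ) :
    ((u : ℂ) ^ s).im = u ^ s.re * Real.sin (s.im * Real.log u) := by
  rw [cpow_def_of_ne_zero (ofReal_ne_zero.2 hu.ne'), ← ofReal_log hu.le, exp_im,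
    rpow_def_of_pos hu]
  simp [mul_comm]

lemma ofReal_inv_cpow_neg {u : ℝ} (hu : 0 < u) (s : ℂ) :
    ((u⁻¹ : ℝ) : ℂ) ^ (-s) = (u : ℂ) ^ s := by
  rw [ofReal_inv, inv_cpow_ofReal_nonneg hu.le, cpow_neg, inv_inv]

end Complex

-- `(j + 1) / n` on the cell `((j - 1) / n, j / n]`: the sums sample one grid point to the right.
noncomputable def gridPointAbove (n : ℕ) (x : ℝ) : ℝ := (⌈x * n⌉ + 1) / n

lemma gridPointAbove_eq_of_mem_Ioc {n : ℕ} (hn : 0 < n) {k : ℕ} {x : ℝ}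
    (hx : x ∈ Ioc ((k : ℝ) / n) ((k + 1) / n)) : gridPointAbove n x = (k + 2) / n := by
  have hn' : (0 : ℝ) < n := by exact_mod_cast hn
  have hceil : ⌈x * n⌉ = (k : ℤ) + 1 := by
    have h1 := (div_lt_iff₀ hn').1 hx.1
    have h2 := (le_div_iff₀ hn').1 hx.2
    rw [Int.ceil_eq_iff]
    push_cast
    constructor <;> linarith
  rw [gridPointAbove, hceil]
  push_cast
  ring

lemma lt_gridPointAbove {n : ℕ} (hn : 0 < n) (x : ℝ) : x < gridPointAbove n x := by
  have hn' : (0 : ℝ) < n := by exact_mod_cast hn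
  rw [gridPointAbove, lt_div_iff₀ hn']
  linarith [Int.le_ceil (x * n)]

lemma gridPointAbove_le {n : ℕ} (hn : 0 < n) (x : ℝ) : gridPointAbove n x ≤ x + 2 / n := by
  have hn' : (0 : ℝ) < n := by exact_mod_cast hn
  rw [gridPointAbove, div_le_iff₀ hn', add_mul, div_mul_cancel₀ _ hn'.ne']
  linarith [Int.ceil_lt_add_one (x * n)]

lemma tendsto_gridPointAbove (x : ℝ) : Tendsto (gridPointAbove · x) atTop (nhds x) := by
  have hup : Tendsto (fun n : ℕ => x + 2 / (n : ℝ)) atTop (nhds x) := by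
    simpa using (tendsto_const_nhds (x := x)).add (tendsto_const_div_atTop_nhds_zero_nat (2 : ℝ))
  refine tendsto_of_tendsto_of_tendsto_of_le_of_le' tendsto_const_nhds hup ?_ ?_
  · filter_upwards [eventually_gt_atTop 0] with n hn using (lt_gridPointAbove hn x).le
  · filter_upwards [eventually_gt_atTop 0] with n hn using gridPointAbove_le hn x

lemma measurable_gridPointAbove (n : ℕ) : Measurable (gridPointAbove n) := by
  unfold gridPointAbove
  fun_prop

lemma integral_comp_gridPointAbove {E : Type*} [NormedAddCommGroup E] [NormedSpace ℝ E]
    [CompleteSpace E] (f : ℝ → E) {n : ℕ} (hn : 0 < n) :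
    ∫ x in (0 : ℝ)..1, f (gridPointAbove n x) =
      (1 / (n : ℝ)) • ∑ j ∈ Finset.Icc 1 n, f ((j + 1) / n) := by
  have hn' : (0 : ℝ) < n := by exact_mod_cast hn
  have hcell_le (k : ℕ) : (k : ℝ) / n ≤ (k + 1) / n := by gcongr; linarith
  have hcell_eqOn (k : ℕ) : EqOn (fun x => f (gridPointAbove n x)) (fun _ => f ((k + 2) / n))
      (Ioc ((k : ℝ) / n) ((k + 1) / n)) := fun x hx => by
    simp only [gridPointAbove_eq_of_mem_Ioc hn hx]
  have hcell (k : ℕ) : ∫ x in (k : ℝ) / n..(k + 1) / n, f (gridPointAbove n x) =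
      (1 / (n : ℝ)) • f ((k + 2) / n) := by
    rw [intervalIntegral.integral_of_le (hcell_le k),
      setIntegral_congr_fun measurableSet_Ioc (hcell_eqOn k), setIntegral_const,
      Real.volume_real_Ioc_of_le (hcell_le k)]
    congr 1
    field_simp
    ring
  have hint : ∀ k < n, IntervalIntegrable (fun x => f (gridPointAbove n x)) volume
      ((k : ℝ) / n) ((k + 1 : ℕ) / n) := fun k _ => by
    rw [Nat.cast_succ, intervalIntegrable_iff_integrableOn_Ioc_of_le (hcell_le k)]
    exact (integrableOn_const measure_Ioc_lt_top.ne).congr_fun (hcell_eqOn k).symm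
      measurableSet_Ioc
  have hsum := intervalIntegral.sum_integral_adjacent_intervals hint
  rw [Nat.cast_zero, zero_div, div_self hn'.ne'] at hsum
  rw [← hsum, ← Finset.Ico_add_one_right_eq_Icc, Finset.sum_Ico_eq_sum_range, Finset.smul_sum,
    Nat.add_sub_cancel]
  refine Finset.sum_congr rfl fun k _ => ?_
  rw [Nat.cast_succ, hcell]
  push_cast
  ring_nf

lemma integral_ofReal_cpow_neg_zero_one {s : ℂ} (hs : s.re < 1) :
    ∫ x in (0 : ℝ)..1, (x : ℂ) ^ (-s) = 1 / (1 - s) := by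
  have hre : -1 < (-s).re := by rw [Complex.neg_re]; linarith
  have hs1 : -s + 1 ≠ 0 := fun h => by
    have := congrArg Complex.re h
    simp only [Complex.add_re, Complex.neg_re, Complex.one_re, Complex.zero_re] at this
    linarith
  rw [integral_cpow (Or.inl hre), Complex.ofReal_one, Complex.one_cpow, Complex.ofReal_zero,
    Complex.zero_cpow hs1, neg_add_eq_sub, sub_zero]

lemma tendsto_riemannSum_cpow_neg {s : ℂ} (hs : s.re < 1) :
    Tendsto (fun n : ℕ => (1 / (n : ℝ)) • ∑ j ∈ Finset.Icc 1 n, (((j + 1) / n : ℝ) : ℂ) ^ (-s))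
      atTop (nhds (1 / (1 - s))) := by
  set f : ℝ → ℂ := fun x => (x : ℂ) ^ (-s)
  have hmeas : ∀ n, AEStronglyMeasurable (fun x => f (gridPointAbove n x))
      (volume.restrict (Ι 0 1)) := fun n =>
    ((by fun_prop : Measurable f).comp (measurable_gridPointAbove n)).aestronglyMeasurable
  have hbound : ∀ᶠ n in atTop, ∀ᵐ x, x ∈ Ι (0 : ℝ) 1 →
      ‖f (gridPointAbove n x)‖ ≤ x ^ (-s.re) + 3 ^ (-s.re) := by
    filter_upwards [eventually_gt_atTop 0] with n hn
    refine ae_of_all _ fun x hx => ?_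
    rw [uIoc_of_le zero_le_one] at hx
    have hxt := lt_gridPointAbove hn x
    have ht3 : gridPointAbove n x ≤ 3 := by
      have := gridPointAbove_le hn x
      have : (2 : ℝ) / n ≤ 2 := div_le_self zero_le_two (by exact_mod_cast hn)
      linarith [hx.2]
    rw [Complex.norm_cpow_eq_rpow_re_of_pos (hx.1.trans hxt), Complex.neg_re]
    exact rpow_le_rpow_add_rpow hx.1 hxt.le ht3 _
  have hbound_int : IntervalIntegrable (fun x : ℝ => x ^ (-s.re) + 3 ^ (-s.re)) volume 0 1 :=
    (intervalIntegral.intervalIntegrable_rpow' (by linarith)).add intervalIntegrable_const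
  have hlim : ∀ᵐ x, x ∈ Ι (0 : ℝ) 1 →
      Tendsto (fun n => f (gridPointAbove n x)) atTop (nhds (f x)) := by
    refine ae_of_all _ fun x hx => ?_
    rw [uIoc_of_le zero_le_one] at hx
    exact (Complex.continuousAt_ofReal_cpow_const x (-s) (Or.inr hx.1.ne')).tendsto.comp
      (tendsto_gridPointAbove x)
  have hDCT := intervalIntegral.tendsto_integral_filter_of_dominated_convergence _
    (Eventually.of_forall hmeas) hbound hbound_int hlim
  rw [integral_ofReal_cpow_neg_zero_one hs] at hDCT
  refine hDCT.congr' ?_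
  filter_upwards [eventually_gt_atTop 0] with n hn using integral_comp_gridPointAbove f hn

/-- For reals `p < 1/2`, `c`, `αʳ`, `αᶜ`, the Cesàro averages
`(1/n) ∑_{j=1}^n (n/(j+1))^p (αʳ cos(c log(n/(j+1))) + αᶜ sin(c log(n/(j+1))))`
converge to `((1−p) αʳ + c αᶜ) / ((1−p)² + c²)`. -/
theorem tendsto_cesaro_rpow_trig (p c αr αc : ℝ) (hp : p < 1 / 2) :
    Tendsto
      (fun n : ℕ => (1 / (n : ℝ)) * ∑ j ∈ Finset.Icc 1 n,
        ((n : ℝ) / ((j : ℝ) + 1)) ^ p *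
          (αr * Real.cos (c * Real.log ((n : ℝ) / ((j : ℝ) + 1))) +
           αc * Real.sin (c * Real.log ((n : ℝ) / ((j : ℝ) + 1)))))
      atTop (nhds (((1 - p) * αr + c * αc) / ((1 - p) ^ 2 + c ^ 2))) := by
  set s : ℂ := ⟨p, c⟩
  have hlim := tendsto_riemannSum_cpow_neg (s := s) (by show p < 1; linarith)
  have hval : αr * (1 / (1 - s)).re + αc * (1 / (1 - s)).im =
      ((1 - p) * αr + c * αc) / ((1 - p) ^ 2 + c ^ 2) := by
    simp [Complex.normSq_apply, s]
    ring
  have hterm (u : ℝ) (hu : 0 < u) :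
      u ^ p * (αr * Real.cos (c * Real.log u) + αc * Real.sin (c * Real.log u)) =
        αr * (((u⁻¹ : ℝ) : ℂ) ^ (-s)).re + αc * (((u⁻¹ : ℝ) : ℂ) ^ (-s)).im := by
    rw [Complex.ofReal_inv_cpow_neg hu, Complex.re_ofReal_cpow hu, Complex.im_ofReal_cpow hu]
    ring
  rw [← hval]
  refine ((((Complex.continuous_re.tendsto _).comp hlim).const_mul αr).add
    (((Complex.continuous_im.tendsto _).comp hlim).const_mul αc)).congr fun n => ?_
  simp only [Function.comp_apply, Complex.smul_re, Complex.smul_im, Complex.re_sum,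
    Complex.im_sum, smul_eq_mul, Finset.mul_sum, ← Finset.sum_add_distrib]
  refine Finset.sum_congr rfl fun j hj => ?_
  have hu : 0 < (n : ℝ) / (j + 1) := by
    have : 0 < n := by simp at hj; omega
    positivity
  rw [hterm _ hu, inv_div]
  ring
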